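/- arXiv:0909.0440 — 2 statements merged into one kernel-verified Lean document; each statement's English description precedes it below -/
import Mathlib

section
/- For any ring R and R-rng I, the intersection of 0 ⊕ I with the Jacobson radical of E(R,I) equals 0 ⊕ rad(I), where rad(I) is the Jacobson radical of the rng I. -/
open MulOpposite

/-- The underlying type of the Dorroh (ideal) extension `E(R,I)`. -/
@[ext]
structure Dorroh (R : Type*) (I : Type*) where
  fst : R
  snd : I

/-- `I` is an `R`-rng: a nonunital ring with a compatible `(R,R)`-bimodule structure. -/
class IsRRng (R I : Type*) [Ring R] [NonUnitalRing I] [Module R I] [Module Rᵐᵒᵖ I] : Prop where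
  smul_op_smul : ∀ (r : R) (s : Rᵐᵒᵖ) (x : I), r • s • x = s • r • x
  smul_mul : ∀ (r : R) (x y : I), r • (x * y) = (r • x) * y
  mul_smul_eq : ∀ (r : R) (x y : I), x * (r • y) = (op r • x) * y
  op_smul_mul : ∀ (r : R) (x y : I), op r • (x * y) = x * (op r • y)

namespace Dorroh

variable {R I : Type*} [Ring R] [NonUnitalRing I] [Module R I] [Module Rᵐᵒᵖ I] [IsRRng R I]

instance : Add (Dorroh R I) := ⟨fun p q => ⟨p.fst + q.fst, p.snd + q.snd⟩⟩
instance : Zero (Dorroh R I) := ⟨⟨0, 0⟩⟩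
instance : Neg (Dorroh R I) := ⟨fun p => ⟨-p.fst, -p.snd⟩⟩
instance : Mul (Dorroh R I) :=
  ⟨fun p q => ⟨p.fst * q.fst, op q.fst • p.snd + p.fst • q.snd + p.snd * q.snd⟩⟩
instance : One (Dorroh R I) := ⟨⟨1, 0⟩⟩

set_option linter.unusedSectionVars false

@[simp] theorem add_fst (p q : Dorroh R I) : (p + q).fst = p.fst + q.fst := rfl
@[simp] theorem add_snd (p q : Dorroh R I) : (p + q).snd = p.snd + q.snd := rfl
@[simp] theorem zero_fst : (0 : Dorroh R I).fst = 0 := rfl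
@[simp] theorem zero_snd : (0 : Dorroh R I).snd = 0 := rfl
@[simp] theorem neg_fst (p : Dorroh R I) : (-p).fst = -p.fst := rfl
@[simp] theorem neg_snd (p : Dorroh R I) : (-p).snd = -p.snd := rfl
@[simp] theorem mul_fst (p q : Dorroh R I) : (p * q).fst = p.fst * q.fst := rfl
@[simp] theorem mul_snd (p q : Dorroh R I) :
    (p * q).snd = op q.fst • p.snd + p.fst • q.snd + p.snd * q.snd := rfl
@[simp] theorem one_fst : (1 : Dorroh R I).fst = 1 := rfl
@[simp] theorem one_snd : (1 : Dorroh R I).snd = 0 := rfl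

instance : Ring (Dorroh R I) where
  add_assoc a b c := by ext <;> simp [add_assoc]
  zero_add a := by ext <;> simp
  add_zero a := by ext <;> simp
  add_comm a b := by ext <;> simp [add_comm]
  neg_add_cancel a := by ext <;> simp
  mul_assoc a b c := by
    ext
    · simp [mul_assoc]
    · simp only [mul_snd, mul_fst, smul_add, mul_smul, op_mul, mul_add, add_mul,
        IsRRng.smul_mul, IsRRng.op_smul_mul, IsRRng.smul_op_smul, mul_assoc]
      rw [← IsRRng.mul_smul_eq]
      abel
  one_mul a := by ext <;> simp
  mul_one a := by ext <;> simp
  left_distrib a b c := by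
    ext
    · simp [mul_add]
    · simp [op_add, add_smul, smul_add, mul_add]
      abel
  right_distrib a b c := by
    ext
    · simp [add_mul]
    · simp [op_add, add_smul, smul_add, add_mul]
      abel
  zero_mul a := by ext <;> simp
  mul_zero a := by ext <;> simp
  nsmul := nsmulRec
  zsmul := zsmulRec

theorem mul_def (p q : Dorroh R I) :
    p * q = ⟨p.fst * q.fst, op q.fst • p.snd + p.fst • q.snd + p.snd * q.snd⟩ := rfl

theorem one_def : (1 : Dorroh R I) = ⟨1, 0⟩ := rfl

theorem add_def (p q : Dorroh R I) : p + q = ⟨p.fst + q.fst, p.snd + q.snd⟩ := rfl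

end Dorroh

/-- An `R`-subrng of the `R`-rng `I`: an `(R,R)`-subbimodule closed under multiplication. -/
def IsRSubrng (R : Type*) {I : Type*} [Ring R] [NonUnitalRing I] [Module R I]
    [Module Rᵐᵒᵖ I] (J : Set I) : Prop :=
  (0 : I) ∈ J ∧ (∀ x ∈ J, ∀ y ∈ J, x + y ∈ J) ∧ (∀ x ∈ J, -x ∈ J) ∧
    (∀ x ∈ J, ∀ y ∈ J, x * y ∈ J) ∧ (∀ (r : R), ∀ x ∈ J, r • x ∈ J) ∧
    (∀ (r : R), ∀ x ∈ J, op r • x ∈ J)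

/-- An `R`-ideal of the `R`-rng `I`: an `(R,R)`-subbimodule that is an ideal of `I`. -/
def IsRIdeal (R : Type*) {I : Type*} [Ring R] [NonUnitalRing I] [Module R I]
    [Module Rᵐᵒᵖ I] (J : Set I) : Prop :=
  IsRSubrng R J ∧ ∀ (i : I), ∀ j ∈ J, i * j ∈ J ∧ j * i ∈ J

/-- The annihilator `ann_R(I) = {r : R | rI = Ir = 0}`. -/
def annR (R I : Type*) [Ring R] [NonUnitalRing I] [Module R I] [Module Rᵐᵒᵖ I] : Set R :=
  {r : R | ∀ x : I, r • x = 0 ∧ op r • x = 0}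

/-- An element `x` of a rng is left quasi-regular if `x + k + kx = 0` for some `k`. -/
def IsLQR {I : Type*} [NonUnitalRing I] (x : I) : Prop := ∃ k : I, x + k + k * x = 0

/-- The Jacobson radical of a rng. -/
def rngRad (I : Type*) [NonUnitalRing I] : Set I := {x : I | ∀ j : I, IsLQR (j * x)}

/-- `npowNZ x n = x ^ (n+1)` in a nonunital ring. -/
def npowNZ {I : Type*} [NonUnitalRing I] (x : I) : ℕ → I
  | 0 => x
  | n + 1 => npowNZ x n * x

/-- An element of a rng is nilpotent if some positive power of it is zero. -/
def IsNilElem {I : Type*} [NonUnitalRing I] (x : I) : Prop := ∃ n : ℕ, npowNZ x n = 0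

/-- A subset of a rng is nil if each of its elements is nilpotent. -/
def SetIsNil {I : Type*} [NonUnitalRing I] (S : Set I) : Prop := ∀ x ∈ S, IsNilElem x

/-- A subset of a rng is nilpotent if for some `n` every product of `n+1` of its
elements vanishes. -/
def SetIsNilpotent {I : Type*} [NonUnitalRing I] (S : Set I) : Prop :=
  ∃ n : ℕ, ∀ (x : I) (l : List I), x ∈ S → (∀ y ∈ l, y ∈ S) → l.length = n →
    l.foldl (· * ·) x = 0

/-- The upper nil radical of a rng: the sum of all of its nil (two-sided) ideals. -/
def upperNil (I : Type*) [NonUnitalRing I] : Set I :=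
  ((sSup {J : TwoSidedIdeal I | ∀ x ∈ J, IsNilElem x} : TwoSidedIdeal I) : Set I)

/-- A rng is semiprime if it has no nonzero ideal of square zero. -/
def IsSemiprimeRng (I : Type*) [NonUnitalRing I] : Prop :=
  ∀ J : TwoSidedIdeal I, (∀ x ∈ J, ∀ y ∈ J, x * y = 0) → J = ⊥

/-- A rng is prime if the product of any two nonzero ideals is nonzero. -/
def IsPrimeRng (I : Type*) [NonUnitalRing I] : Prop :=
  ∀ J K : TwoSidedIdeal I, (∀ x ∈ J, ∀ y ∈ K, x * y = 0) → J = ⊥ ∨ K = ⊥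

/-- `ψ : I → R` restricts to an `R`-homomorphism on the subset `J ⊆ I`. -/
def IsRHomOn (R : Type*) {I : Type*} [Ring R] [NonUnitalRing I] [Module R I]
    [Module Rᵐᵒᵖ I] (J : Set I) (ψ : I → R) : Prop :=
  (∀ x ∈ J, ∀ y ∈ J, ψ (x + y) = ψ x + ψ y) ∧
    (∀ x ∈ J, ∀ y ∈ J, ψ (x * y) = ψ x * ψ y) ∧
    (∀ (r : R), ∀ x ∈ J, ψ (r • x) = r * ψ x) ∧
    (∀ (r : R), ∀ x ∈ J, ψ (op r • x) = ψ x * r)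

/-- `φ : I → R` is an `R`-homomorphism. -/
def IsRHom (R : Type*) {I : Type*} [Ring R] [NonUnitalRing I] [Module R I]
    [Module Rᵐᵒᵖ I] (φ : I → R) : Prop :=
  (∀ x y : I, φ (x + y) = φ x + φ y) ∧ (∀ x y : I, φ (x * y) = φ x * φ y) ∧
    (∀ (r : R) (x : I), φ (r • x) = r * φ x) ∧ (∀ (r : R) (x : I), φ (op r • x) = φ x * r)

/-- A two-sided ideal `P` of a ring is prime if `AB ⊆ P` implies `A ⊆ P` or `B ⊆ P`
for all two-sided ideals `A`, `B`. -/
def TsiPrime {S : Type*} [Ring S] (P : TwoSidedIdeal S) : Prop :=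
  ∀ A B : TwoSidedIdeal S, (∀ a ∈ A, ∀ b ∈ B, a * b ∈ P) → A ≤ P ∨ B ≤ P

/-- A two-sided ideal is maximal if it is a maximal proper ideal. -/
def TsiMaximal {S : Type*} [Ring S] (P : TwoSidedIdeal S) : Prop :=
  P ≠ ⊤ ∧ ∀ Q : TwoSidedIdeal S, P ≤ Q → Q = P ∨ Q = ⊤

/-- A two-sided-ideal subset of a ring. -/
def IsTwoSidedIdealSet (R : Type*) [Ring R] (P : Set R) : Prop :=
  (0 : R) ∈ P ∧ (∀ x ∈ P, ∀ y ∈ P, x + y ∈ P) ∧ (∀ x ∈ P, -x ∈ P) ∧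
    (∀ (r : R), ∀ x ∈ P, r * x ∈ P ∧ x * r ∈ P)

/-- A subset `P` of `R` is a prime ideal if it is a two-sided ideal and `AB ⊆ P`
implies `A ⊆ P` or `B ⊆ P` for all two-sided ideals `A, B`. -/
def IsPrimeIdealSet (R : Type*) [Ring R] (P : Set R) : Prop :=
  IsTwoSidedIdealSet R P ∧ ∀ A B : TwoSidedIdeal R,
    (∀ a ∈ A, ∀ b ∈ B, a * b ∈ P) → ((A : Set R) ⊆ P ∨ (B : Set R) ⊆ P)

/-- A subset `P` of `R` is a semiprime ideal if it is a two-sided ideal and `A² ⊆ P`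
implies `A ⊆ P` for all two-sided ideals `A`. -/
def IsSemiprimeIdealSet (R : Type*) [Ring R] (P : Set R) : Prop :=
  IsTwoSidedIdealSet R P ∧ ∀ A : TwoSidedIdeal R,
    (∀ a ∈ A, ∀ b ∈ A, a * b ∈ P) → (A : Set R) ⊆ P

section IdealData

variable (R I : Type*) [Ring R] [NonUnitalRing I] [Module R I] [Module Rᵐᵒᵖ I] [IsRRng R I]

/-- The data describing an ideal of `E(R,I)`: ideals `Z ⊆ A` of `R`, an `R`-subrng `J ⊆ I`,
and a surjective `R`-homomorphism `φ : J → A/Z` (represented by a set-map `ψ : I → R`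
choosing representatives), satisfying conditions (a) `ai - ji ∈ ker φ` and
(b) `ia - ij ∈ ker φ` for all `(a,-j) ∈ K`, `i ∈ I`. -/
def DorrohIdealData (A Z : TwoSidedIdeal R) (J : Set I) (ψ : I → R) : Prop :=
  Z ≤ A ∧ IsRSubrng R J ∧
    (∀ x ∈ J, ∀ y ∈ J, ψ (x + y) - (ψ x + ψ y) ∈ Z) ∧
    (∀ x ∈ J, ∀ y ∈ J, ψ (x * y) - ψ x * ψ y ∈ Z) ∧
    (∀ (r : R), ∀ x ∈ J, ψ (r • x) - r * ψ x ∈ Z) ∧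
    (∀ (r : R), ∀ x ∈ J, ψ (op r • x) - ψ x * r ∈ Z) ∧
    (∀ j ∈ J, ψ j ∈ A) ∧
    (∀ a ∈ A, ∃ j ∈ J, a - ψ j ∈ Z) ∧
    (∀ (a : R), ∀ j ∈ J, a ∈ A → a - ψ j ∈ Z → ∀ i : I,
      (a • i - j * i ∈ J ∧ ψ (a • i - j * i) ∈ Z) ∧
      (op a • i - i * j ∈ J ∧ ψ (op a • i - i * j) ∈ Z))

/-- The subset `K = {(a, -j) : a ∈ A, j ∈ J, a + Z = φ(j)}` of `E(R,I)`. -/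
def DorrohIdealSet (A Z : TwoSidedIdeal R) (J : Set I) (ψ : I → R) : Set (Dorroh R I) :=
  {p : Dorroh R I | p.fst ∈ A ∧ -p.snd ∈ J ∧ p.fst - ψ (-p.snd) ∈ Z}

end IdealData

variable (R I : Type*) [Ring R] [NonUnitalRing I] [Module R I] [Module Rᵐᵒᵖ I] [IsRRng R I]

open MulOpposite


theorem rad_add' {I : Type*} [NonUnitalRing I] {x y : I}
    (hx : x ∈ rngRad I) (hy : y ∈ rngRad I) : x + y ∈ rngRad I := by
  intro j
  obtain ⟨k, hk⟩ := hx j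
  obtain ⟨m, hm⟩ := hy (j + k * j)
  refine ⟨m + k + m * k, ?_⟩
  have h : j * (x + y) + (m + k + m * k) + (m + k + m * k) * (j * (x + y)) =
      ((j * x + k + k * (j * x)) + m * (j * x + k + k * (j * x))) +
        ((j + k * j) * y + m + m * ((j + k * j) * y)) := by noncomm_ring
  rw [h, hk, hm]; simp

theorem rad_lqr' {I : Type*} [NonUnitalRing I] {x : I} (hx : x ∈ rngRad I) : IsLQR x := by
  obtain ⟨k, hk⟩ := hx (-x)
  refine ⟨k - x - k * x, ?_⟩
  have h : x + (k - x - k * x) + (k - x - k * x) * x =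
      (-x) * x + k + k * ((-x) * x) := by noncomm_ring
  rw [h, hk]

/-- `(0 ⊕ I) ∩ rad(E(R,I)) = 0 ⊕ rad(I)`. -/
theorem dorroh_rad_inter :
    {p : Dorroh R I | p.fst = 0} ∩ rngRad (Dorroh R I) =
      {p : Dorroh R I | p.fst = 0 ∧ p.snd ∈ rngRad I} := by
  ext p
  simp only [Set.mem_inter_iff, Set.mem_setOf_eq]
  constructor
  · rintro ⟨h0, hrad⟩
    refine ⟨h0, fun j => ?_⟩
    obtain ⟨k, hk⟩ := hrad ⟨0, j⟩
    have hfst : k.fst = 0 := by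
      have := congrArg Dorroh.fst hk
      simpa using this
    refine ⟨k.snd, ?_⟩
    have := congrArg Dorroh.snd hk
    simpa [Dorroh.mul_def, Dorroh.add_def, h0, hfst] using this
  · rintro ⟨h0, hrad⟩
    refine ⟨h0, fun j => ?_⟩
    have hy : j.fst • p.snd + j.snd * p.snd ∈ rngRad I :=
      rad_add'
        (fun i => by rw [IsRRng.mul_smul_eq]; exact hrad _)
        (fun i => by rw [← mul_assoc]; exact hrad _)
    obtain ⟨u, hu⟩ := rad_lqr' hy
    refine ⟨⟨0, u⟩, ?_⟩
    ext
    · simp [h0]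
    · simp only [Dorroh.add_snd, Dorroh.mul_snd, Dorroh.mul_fst, h0, mul_zero, op_zero,
        zero_smul, zero_add, add_zero, Dorroh.zero_snd]
      rw [← hu]
end

section
/- If I is an R-rng that is finitely generated as a left R-module by elements commuting with every element of R, then rad(E(R,I)) = rad(R) ⊕ rad(I). -/
open MulOpposite

variable (R I : Type*) [Ring R] [NonUnitalRing I] [Module R I] [Module Rᵐᵒᵖ I] [IsRRng R I]

open MulOpposite


/-!
The only nontrivial inclusion is `I · rad(R) ⊆ rad(I)`. Because `I` is spanned by central
elements, `I · r ⊆ rad(R) · I` for `r ∈ rad(R)`; so for `x ∈ I · r` the left `R`-linear map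
`k ↦ k + k x` is onto modulo `rad(R) · I`, hence onto by Nakayama's lemma, which makes `x`
left quasi-regular. Everything else is coordinate bookkeeping in `E(R,I) = R ⊕ I`.
-/

section QuasiRegular

variable {S : Type*} [NonUnitalRing S]

theorem isLQR_add {a d k : S} (hk : a + k + k * a = 0) (h : IsLQR (d + k * d)) :
    IsLQR (a + d) := by
  obtain ⟨k', hk'⟩ := h
  refine ⟨k' + k + k' * k, ?_⟩
  calc (a + d) + (k' + k + k' * k) + (k' + k + k' * k) * (a + d)
      = (a + k + k * a) + ((d + k * d) + k' + k' * (d + k * d)) + k' * (a + k + k * a) := by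
        noncomm_ring
    _ = 0 := by rw [hk, hk']; simp

theorem isLQR_of_mem_rngRad {x : S} (hx : x ∈ rngRad S) : IsLQR x := by
  obtain ⟨k, hk⟩ := hx (-x)
  refine ⟨k - x - k * x, ?_⟩
  calc x + (k - x - k * x) + (k - x - k * x) * x = -x * x + k + k * (-x * x) := by noncomm_ring
    _ = 0 := hk

theorem zero_mem_rngRad : (0 : S) ∈ rngRad S := fun _ => ⟨0, by simp⟩

theorem add_mem_rngRad {x y : S} (hx : x ∈ rngRad S) (hy : y ∈ rngRad S) :
    x + y ∈ rngRad S := by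
  intro j
  obtain ⟨k, hk⟩ := hx j
  rw [mul_add]
  refine isLQR_add hk ?_
  rw [← mul_assoc, ← add_mul]
  exact hy _

theorem neg_mem_rngRad {x : S} (hx : x ∈ rngRad S) : -x ∈ rngRad S := fun j => by
  simpa only [mul_neg, neg_mul] using hx (-j)

theorem mul_mem_rngRad_left (j : S) {x : S} (hx : x ∈ rngRad S) : j * x ∈ rngRad S :=
  fun i => by simpa only [mul_assoc] using hx (i * j)

end QuasiRegular

theorem mem_rngRad_iff_mem_jacobson {R : Type*} [Ring R] {x : R} :
    x ∈ rngRad R ↔ x ∈ Ring.jacobson R := by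
  rw [← Ideal.jacobson_bot, Ideal.mem_jacobson_iff]
  refine forall_congr' fun y => ⟨fun ⟨k, hk⟩ => ⟨1 + k, ?_⟩, fun ⟨z, hz⟩ => ⟨z - 1, ?_⟩⟩
  · rw [Ideal.mem_bot, ← hk]; noncomm_ring
  · rw [Ideal.mem_bot] at hz; rw [← hz]; noncomm_ring

theorem Submodule.eq_top_of_sup_jacobson_smul_top_eq_top {R M : Type*} [Ring R]
    [AddCommGroup M] [Module R M] [Module.Finite R M] {N : Submodule R M}
    (h : N ⊔ Ring.jacobson R • ⊤ = ⊤) : N = ⊤ := by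
  have htop : (⊤ : Submodule R (M ⧸ N)) = Ring.jacobson R • ⊤ :=
    calc ⊤ = (N ⊔ Ring.jacobson R • ⊤).map N.mkQ := by rw [h, Submodule.map_top, N.range_mkQ]
      _ = Ring.jacobson R • ⊤ := by
        rw [Submodule.map_sup, N.mkQ_map_self, bot_sup_eq, Submodule.map_smul'',
          Submodule.map_top, N.range_mkQ]
  have hbot : (⊤ : Submodule R (M ⧸ N)) = ⊥ :=
    Module.Finite.fg_top.eq_bot_of_le_jacobson_smul htop.le
  rw [← Submodule.Quotient.subsingleton_iff, ← Submodule.subsingleton_iff R]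
  exact subsingleton_of_bot_eq_top hbot.symm

theorem isLQR_of_forall_mul_mem_jacobson_smul_top {R A : Type*} [Ring R] [NonUnitalRing A]
    [Module R A] [IsScalarTower R A A] [Module.Finite R A] {x : A}
    (hx : ∀ k : A, k * x ∈ Ring.jacobson R • (⊤ : Submodule R A)) : IsLQR x := by
  set ρ : A →ₗ[R] A := LinearMap.id + LinearMap.mulRight R x
  have hrange : LinearMap.range ρ = ⊤ := by
    refine Submodule.eq_top_of_sup_jacobson_smul_top_eq_top (eq_top_iff.mpr fun k _ => ?_)
    have hk : k = ρ k - k * x := by simp [ρ]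
    rw [hk]
    exact Submodule.sub_mem _ (Submodule.mem_sup_left ⟨k, rfl⟩) (Submodule.mem_sup_right (hx k))
  obtain ⟨k, hk⟩ := LinearMap.range_eq_top.mp hrange (-x)
  replace hk : k + k * x = -x := hk
  exact ⟨k, by rw [add_assoc, hk, add_neg_cancel]⟩

theorem op_smul_mem_smul_top_of_span_central {R M : Type*} [Ring R] [AddCommGroup M]
    [Module R M] [Module Rᵐᵒᵖ M] [SMulCommClass Rᵐᵒᵖ R M] {s : Set M}
    (hs : ∀ x ∈ s, ∀ r : R, r • x = op r • x) (hspan : Submodule.span R s = ⊤)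
    {J : Ideal R} {r : R} (hr : r ∈ J) (y : M) : op r • y ∈ J • (⊤ : Submodule R M) := by
  have hgen : s ⊆ (J • ⊤ : Submodule R M).comap (DistribSMul.toLinearMap R M (op r)) :=
    fun x hx => by
      simpa [← hs x hx r] using Submodule.smul_mem_smul hr Submodule.mem_top
  exact Submodule.span_le.mpr hgen (hspan ▸ Submodule.mem_top)

section RRng

variable {R I}

instance IsRRng.isScalarTower : IsScalarTower R I I :=
  ⟨fun r x y => (IsRRng.smul_mul r x y).symm⟩

instance IsRRng.smulCommClass : SMulCommClass Rᵐᵒᵖ R I :=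
  ⟨fun s r x => (IsRRng.smul_op_smul r s x).symm⟩

theorem smul_mem_rngRad (r : R) {y : I} (hy : y ∈ rngRad I) : r • y ∈ rngRad I := fun j => by
  rw [IsRRng.mul_smul_eq]
  exact hy _

theorem op_smul_mem_rngRad [Module.Finite R I] {s : Set I}
    (hs : ∀ x ∈ s, ∀ r : R, r • x = op r • x) (hspan : Submodule.span R s = ⊤) {r : R}
    (hr : r ∈ rngRad R) (y : I) : op r • y ∈ rngRad I := by
  rw [mem_rngRad_iff_mem_jacobson] at hr
  intro j
  rw [← IsRRng.op_smul_mul]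
  refine isLQR_of_forall_mul_mem_jacobson_smul_top (R := R) fun k => ?_
  rw [← IsRRng.op_smul_mul]
  exact op_smul_mem_smul_top_of_span_central hs hspan hr _

namespace Dorroh

theorem isLQR_fst {p : Dorroh R I} (hp : IsLQR p) : IsLQR p.fst :=
  let ⟨q, hq⟩ := hp
  ⟨q.fst, congrArg fst hq⟩

theorem fst_mem_rngRad {p : Dorroh R I} (hp : p ∈ rngRad (Dorroh R I)) : p.fst ∈ rngRad R :=
  fun r => isLQR_fst (hp ⟨r, 0⟩)

theorem isLQR_inr_iff {y : I} : IsLQR (⟨0, y⟩ : Dorroh R I) ↔ IsLQR y := by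
  constructor
  · rintro ⟨q, hq⟩
    have hfst : q.fst = 0 := by simpa using congrArg fst hq
    refine ⟨q.snd, ?_⟩
    simpa [hfst] using congrArg snd hq
  · rintro ⟨k, hk⟩
    exact ⟨⟨0, k⟩, by ext <;> simp [hk]⟩

theorem mem_rngRad_of_inr_mem {y : I} (h : ⟨0, y⟩ ∈ rngRad (Dorroh R I)) : y ∈ rngRad I := by
  intro j
  have hmul : (⟨0, j⟩ * ⟨0, y⟩ : Dorroh R I) = ⟨0, j * y⟩ := by ext <;> simp
  rw [← isLQR_inr_iff (R := R), ← hmul]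
  exact h _

/-- If `k` is a quasi-inverse of `b`, then `(k, 0)` is one of `(b, 0)`, and what remains is
`(0, z + k z)` with `z + k z ∈ rad(I)`. -/
theorem isLQR_mk {b : R} {z : I} (hb : IsLQR b) (hz : z ∈ rngRad I) :
    IsLQR (⟨b, z⟩ : Dorroh R I) := by
  obtain ⟨k, hk⟩ := hb
  have hsplit : (⟨b, z⟩ : Dorroh R I) = ⟨b, 0⟩ + ⟨0, z⟩ := by ext <;> simp
  have hrest : (⟨0, z⟩ + ⟨k, 0⟩ * ⟨0, z⟩ : Dorroh R I) = ⟨0, z + k • z⟩ := by ext <;> simp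
  rw [hsplit]
  refine isLQR_add (k := ⟨k, 0⟩) (by ext <;> simp [hk]) ?_
  rw [hrest, isLQR_inr_iff]
  exact isLQR_of_mem_rngRad (add_mem_rngRad hz (smul_mem_rngRad k hz))

theorem mk_mem_rngRad [Module.Finite R I] {s : Set I}
    (hs : ∀ x ∈ s, ∀ r : R, r • x = op r • x) (hspan : Submodule.span R s = ⊤) {a : R} {y : I}
    (ha : a ∈ rngRad R) (hy : y ∈ rngRad I) : (⟨a, y⟩ : Dorroh R I) ∈ rngRad (Dorroh R I) :=
  fun q => isLQR_mk (isLQR_of_mem_rngRad (mul_mem_rngRad_left q.fst ha)) <|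
    add_mem_rngRad
      (add_mem_rngRad (op_smul_mem_rngRad hs hspan ha q.snd) (smul_mem_rngRad q.fst hy))
      (mul_mem_rngRad_left q.snd hy)

end Dorroh

end RRng

/-- If `I` is generated as a left `R`-module by finitely many elements commuting with
all elements of `R`, then `rad(E(R,I)) = rad(R) ⊕ rad(I)`. -/
theorem dorroh_rad_of_fg_central
    (hfg : ∃ s : Finset I, (∀ x ∈ s, ∀ r : R, r • x = op r • x) ∧
      Submodule.span R (s : Set I) = ⊤) :
    rngRad (Dorroh R I) =
      {p : Dorroh R I | p.fst ∈ rngRad R ∧ p.snd ∈ rngRad I} := by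
  obtain ⟨s, hs, hspan⟩ := hfg
  have : Module.Finite R I := ⟨⟨s, hspan⟩⟩
  have hmk {a : R} {y : I} (ha : a ∈ rngRad R) (hy : y ∈ rngRad I) :
      (⟨a, y⟩ : Dorroh R I) ∈ rngRad (Dorroh R I) :=
    Dorroh.mk_mem_rngRad (s := s) hs hspan ha hy
  ext p
  constructor
  · intro hp
    have hfst : p.fst ∈ rngRad R := Dorroh.fst_mem_rngRad hp
    have hinr : (⟨0, p.snd⟩ : Dorroh R I) ∈ rngRad (Dorroh R I) := by
      convert add_mem_rngRad hp (neg_mem_rngRad (hmk hfst zero_mem_rngRad)) using 1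
      ext <;> simp
    exact ⟨hfst, Dorroh.mem_rngRad_of_inr_mem hinr⟩
  · rintro ⟨ha, hy⟩
    exact hmk ha hy
end
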